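/- Fix σ > 0, θ ∈ (0, σ], and a function γ : (0,∞) → (0,∞). For δ > 0 put α = γ(δ)·√(coth δ), β = γ(δ)⁻¹·√(coth δ), Φ_δ(t,ω) = (σ²/(2π cosh δ))·exp(−t²/α² − ω²/β²), and λ = θ²/(2π). Define D(δ) = Σ_{k=0}^∞ min(θ², σ² e^{−(2k+1)δ}) and R(δ) = Σ_{k=0}^∞ max(0, (1/2)·ln(σ² e^{−(2k+1)δ}/θ²)). Then both (D(δ) − ∬_{ℝ²} min(λ, Φ_δ(t,ω)) dt dω)/coth δ → 0 and (R(δ) − (1/(2π))·∬_{ℝ²} max(0, (1/2)·ln(Φ_δ(t,ω)/λ)) dt dω)/coth δ → 0 as δ → 0+. -/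

import Mathlib

/-!
The variances `σ² e^{-(2k+1)δ}` sample the profile `s ↦ σ² e^{-s}` at the odd multiples of `δ`, so
`D(δ)` and `R(δ)` are midpoint Riemann sums with step `2δ` of an antitone integrable function `g`
on `(0, ∞)`; by the integral test, `2δ · ∑ₖ g((2k+1)δ) = ∫₀^∞ g + O(δ)`. On the other side,
`Φ_δ(t, ω)` is `σ²/(2π) · e^{-(r + log cosh δ)}` with `r = t²/α² + ω²/β²`, and polar coordinates
turn the plane integral into `π α β = π coth δ` times the integral of the same `g` over
`(log cosh δ, ∞)`. As `δ coth δ → 1` and `log cosh δ → 0`, both sides divided by `coth δ` tend to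
`½ ∫₀^∞ g`.
-/

open Real Filter Set MeasureTheory
open scoped Topology

section RiemannSum

variable {g : ℝ → ℝ}

theorem abs_tsum_odd_sub_integral_le (hg : AntitoneOn g (Ici 0)) (hg0 : ∀ s ∈ Ici 0, 0 ≤ g s)
    (hgi : IntegrableOn g (Ioi 0)) {δ : ℝ} (hδ : 0 < δ) :
    |∑' k : ℕ, g ((2 * k + 1) * δ) - (2 * δ)⁻¹ * ∫ s in Ioi 0, g s| ≤ g 0 := by
  have h2δ : 0 < 2 * δ := by positivity
  set f : ℝ → ℝ := fun x => g (2 * δ * x)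
  have hf : AntitoneOn f (Ici 0) := fun x hx y hy hxy =>
    hg (mul_nonneg h2δ.le hx) (mul_nonneg h2δ.le hy) (by gcongr)
  have hf0 : ∀ x ∈ Ioi 0, 0 ≤ f x := fun x hx => hg0 _ (mul_nonneg h2δ.le (le_of_lt hx))
  have hfi : IntegrableOn f (Ioi 0) :=
    (integrableOn_Ioi_comp_mul_left_iff g 0 h2δ).2 (by rwa [mul_zero])
  have hIf : ∫ x in Ioi 0, f x = (2 * δ)⁻¹ * ∫ s in Ioi 0, g s := by
    simpa using integral_comp_mul_left_Ioi g 0 h2δ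
  have hfs : Summable fun n : ℕ => f n := hf.summable_of_integrableOn_Ioi_zero hfi hf0
  -- compare with the sums over the even nodes `2kδ`, to which the unit-step integral test applies
  have hupper (k : ℕ) : g ((2 * k + 1) * δ) ≤ f k :=
    hg (mem_Ici.2 (by positivity)) (mem_Ici.2 (by positivity)) (by nlinarith)
  have hlower (k : ℕ) : f (k + 1 : ℕ) ≤ g ((2 * k + 1) * δ) :=
    hg (mem_Ici.2 (by positivity)) (mem_Ici.2 (by positivity)) (by push_cast; nlinarith)
  have hs : Summable fun k : ℕ => g ((2 * k + 1) * δ) :=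
    hfs.of_nonneg_of_le (fun k => hg0 _ (mem_Ici.2 (by positivity))) hupper
  have hS_le : ∑' k : ℕ, g ((2 * k + 1) * δ) ≤ f 0 + ∫ x in Ioi 0, f x :=
    (hs.tsum_le_tsum hupper hfs).trans (hf.tsum_le_integral hfi hf0)
  have hS_ge : ∫ x in Ioi 0, f x ≤ f 0 + ∑' k : ℕ, g ((2 * k + 1) * δ) := by
    calc ∫ x in Ioi 0, f x ≤ ∑' n : ℕ, f n := hf.integral_le_tsum hfs hf0
      _ = f 0 + ∑' k : ℕ, f (k + 1 : ℕ) := by simpa using hfs.tsum_eq_zero_add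
      _ ≤ f 0 + ∑' k : ℕ, g ((2 * k + 1) * δ) :=
        add_le_add le_rfl (((summable_nat_add_iff 1).2 hfs).tsum_le_tsum hlower hs)
  simp only [f, mul_zero] at hS_le hS_ge
  rw [hIf] at hS_le hS_ge
  exact abs_sub_le_iff.2 ⟨by linarith, by linarith⟩

theorem tendsto_mul_tsum_odd (hg : AntitoneOn g (Ici 0)) (hg0 : ∀ s ∈ Ici 0, 0 ≤ g s)
    (hgi : IntegrableOn g (Ioi 0)) :
    Tendsto (fun δ => δ * ∑' k : ℕ, g ((2 * k + 1) * δ)) (𝓝[>] 0)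
      (𝓝 ((∫ s in Ioi 0, g s) / 2)) := by
  rw [tendsto_iff_norm_sub_tendsto_zero]
  have hlim : Tendsto (fun δ : ℝ => δ * g 0) (𝓝[>] 0) (𝓝 0) :=
    ((continuous_id.mul_const (g 0)).tendsto' 0 0 (zero_mul _)).mono_left nhdsWithin_le_nhds
  refine squeeze_zero' (Eventually.of_forall fun _ => norm_nonneg _) ?_ hlim
  filter_upwards [self_mem_nhdsWithin] with δ (hδ : 0 < δ)
  have h := abs_tsum_odd_sub_integral_le hg hg0 hgi hδ
  calc ‖δ * ∑' k : ℕ, g ((2 * k + 1) * δ) - (∫ s in Ioi 0, g s) / 2‖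
      = δ * |∑' k : ℕ, g ((2 * k + 1) * δ) - (2 * δ)⁻¹ * ∫ s in Ioi 0, g s| := by
        rw [Real.norm_eq_abs, ← abs_of_pos hδ, ← abs_mul, abs_of_pos hδ]
        congr 1
        field_simp
    _ ≤ δ * g 0 := by gcongr

end RiemannSum

theorem continuousWithinAt_integral_Ioi {g : ℝ → ℝ} {a : ℝ} (hg : IntegrableOn g (Ioi a)) :
    ContinuousWithinAt (fun x => ∫ s in Ioi x, g s) (Ici a) a := by
  have hIcc : IntegrableOn g (uIcc a (a + 1)) := by
    rw [uIcc_of_le (by linarith), integrableOn_Icc_iff_integrableOn_Ioc]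
    exact hg.mono_set Ioc_subset_Ioi_self
  have hprim : ContinuousWithinAt (fun x => ∫ s in a..x, g s) (Ici a) a :=
    ((intervalIntegral.continuousOn_primitive_interval hIcc).continuousWithinAt
      left_mem_uIcc).mono_of_mem_nhdsWithin
      (by rw [uIcc_of_le (by linarith)]; exact Icc_mem_nhdsGE (by linarith))
  refine ((continuousWithinAt_const (b := ∫ s in Ioi a, g s)).sub hprim).congr
    (fun x (hx : a ≤ x) => ?_) ?_
  · rw [Pi.sub_apply, ← intervalIntegral.integral_Ioi_sub_Ioi hg hx, sub_sub_cancel]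
  · simp

theorem tendsto_tsum_odd_sub_integral_div {g : ℝ → ℝ} (hg : AntitoneOn g (Ici 0))
    (hg0 : ∀ s ∈ Ici 0, 0 ≤ g s) (hgi : IntegrableOn g (Ioi 0)) {q ε : ℝ → ℝ}
    (hq : Tendsto (fun δ => δ * q δ) (𝓝[>] 0) (𝓝 1)) (hε : Tendsto ε (𝓝[>] 0) (𝓝[≥] 0)) :
    Tendsto (fun δ => (∑' k : ℕ, g ((2 * k + 1) * δ) - q δ / 2 * ∫ s in Ioi (ε δ), g s) / q δ)
      (𝓝[>] 0) (𝓝 0) := by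
  have hsum := (tendsto_mul_tsum_odd hg hg0 hgi).mul (hq.inv₀ one_ne_zero)
  have hint := ((continuousWithinAt_integral_Ioi hgi).tendsto.comp hε).div_const 2
  have := hsum.sub hint
  rw [inv_one, mul_one, sub_self] at this
  refine this.congr' ?_
  filter_upwards [hq.eventually_ne one_ne_zero] with δ hδq
  have hδ : δ ≠ 0 := left_ne_zero_of_mul hδq
  have hqδ : q δ ≠ 0 := right_ne_zero_of_mul hδq
  simp only [Function.comp_apply]
  field_simp

theorem integral_Ioi_comp_add_right (g : ℝ → ℝ) (a d : ℝ) :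
    ∫ x in Ioi a, g (x + d) = ∫ x in Ioi (a + d), g x := by
  have := (measurePreserving_add_right volume d).setIntegral_preimage_emb
    (measurableEmbedding_addRight d) g (Ioi (a + d))
  rwa [preimage_add_const_Ioi, add_sub_cancel_right] at this


theorem integral_comp_div_prodMk {E : Type*} [NormedAddCommGroup E] [NormedSpace ℝ E]
    (f : ℝ × ℝ → E) {a b : ℝ} (ha : a ≠ 0) (hb : b ≠ 0) :
    ∫ p : ℝ × ℝ, f (p.1 / a, p.2 / b) = |a * b| • ∫ p, f p := by
  have hmap (c : ℝ) (hc : c ≠ 0) :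
      Measure.map (· / c) (volume : Measure ℝ) = ENNReal.ofReal |c| • volume := by
    simpa [div_eq_inv_mul] using Real.map_volume_mul_left (inv_ne_zero hc)
  have hemb (c : ℝ) (hc : c ≠ 0) : MeasurableEmbedding (· / c : ℝ → ℝ) := by
    simpa [div_eq_mul_inv] using
      (MeasurableEquiv.mulRight₀ c⁻¹ (inv_ne_zero hc)).measurableEmbedding
  have hmap₂ : Measure.map (Prod.map (· / a) (· / b)) (volume : Measure (ℝ × ℝ)) =
      ENNReal.ofReal |a * b| • volume := by
    rw [Measure.volume_eq_prod, ← Measure.map_prod_map _ _ (by fun_prop) (by fun_prop),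
      hmap a ha, hmap b hb, Measure.prod_smul_left, Measure.prod_smul_right, smul_smul,
      ← ENNReal.ofReal_mul (abs_nonneg a), abs_mul]
  change ∫ p, f (Prod.map (· / a) (· / b) p) = _
  rw [← ((hemb a ha).prodMap (hemb b hb)).integral_map, hmap₂, integral_smul_measure,
    ENNReal.toReal_ofReal (abs_nonneg _)]

theorem integral_comp_sq_add_sq (G : ℝ → ℝ) :
    ∫ p : ℝ × ℝ, G (p.1 ^ 2 + p.2 ^ 2) = π * ∫ s in Ioi 0, G s := by
  have hradial : ∫ r in Ioi 0, r * G (r ^ 2) = (∫ s in Ioi 0, G s) / 2 := by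
    rw [← integral_comp_rpow_Ioi G two_ne_zero, ← integral_div]
    refine setIntegral_congr_fun measurableSet_Ioi fun r _ => ?_
    norm_num [rpow_two]
    ring
  calc ∫ p : ℝ × ℝ, G (p.1 ^ 2 + p.2 ^ 2)
      = ∫ p in polarCoord.target, p.1 * G (p.1 ^ 2) * 1 := by
        rw [← integral_comp_polarCoord_symm]
        refine setIntegral_congr_fun polarCoord.open_target.measurableSet fun p _ => ?_
        simp only [polarCoord_symm_apply, smul_eq_mul, mul_one, mul_pow, ← mul_add,
          cos_sq_add_sin_sq]
    _ = (∫ r in Ioi 0, r * G (r ^ 2)) * ∫ _ in Ioo (-π) π, (1 : ℝ) := by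
        rw [← setIntegral_prod_mul]; rfl
    _ = π * ∫ s in Ioi 0, G s := by
      rw [hradial, setIntegral_const, volume_real_Ioo_of_le (by linarith [pi_pos])]
      simp only [smul_eq_mul, mul_one]
      ring

theorem integral_comp_sq_div_add_sq_div (G : ℝ → ℝ) {a b : ℝ} (ha : a ≠ 0) (hb : b ≠ 0) :
    ∫ p : ℝ × ℝ, G (p.1 ^ 2 / a ^ 2 + p.2 ^ 2 / b ^ 2) = π * |a * b| * ∫ s in Ioi 0, G s := by
  have := integral_comp_div_prodMk (fun p => G (p.1 ^ 2 + p.2 ^ 2)) ha hb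
  simp only [div_pow] at this
  rw [this, integral_comp_sq_add_sq, smul_eq_mul]
  ring

noncomputable def wignerVilleSpectrum (σ γδ δ t ω : ℝ) : ℝ :=
  σ ^ 2 / (2 * π * cosh δ) *
    exp (-(t ^ 2 / (γδ * √(cosh δ / sinh δ)) ^ 2) - ω ^ 2 / (γδ⁻¹ * √(cosh δ / sinh δ)) ^ 2)

section wignerVilleSpectrum

variable {γδ δ : ℝ} (σ : ℝ) (hγ : 0 < γδ) (hδ : 0 < δ)
include hγ hδ

theorem integral_comp_wignerVilleSpectrum (G : ℝ → ℝ) :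
    ∫ p : ℝ × ℝ, G (wignerVilleSpectrum σ γδ δ p.1 p.2) =
      π * (cosh δ / sinh δ) * ∫ s in Ioi (log (cosh δ)), G ((2 * π)⁻¹ * (σ ^ 2 * exp (-s))) := by
  have hq : 0 < cosh δ / sinh δ := div_pos (cosh_pos δ) (sinh_pos_iff.2 hδ)
  have hab : |γδ * √(cosh δ / sinh δ) * (γδ⁻¹ * √(cosh δ / sinh δ))| = cosh δ / sinh δ := by
    rw [mul_mul_mul_comm, mul_inv_cancel₀ hγ.ne', one_mul, mul_self_sqrt hq.le, abs_of_pos hq]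
  have hshift (t ω : ℝ) : wignerVilleSpectrum σ γδ δ t ω = (2 * π)⁻¹ * (σ ^ 2 * exp
      (-(t ^ 2 / (γδ * √(cosh δ / sinh δ)) ^ 2 + ω ^ 2 / (γδ⁻¹ * √(cosh δ / sinh δ)) ^ 2 +
        log (cosh δ)))) := by
    rw [wignerVilleSpectrum, neg_add, exp_add, exp_neg (log _), exp_log (cosh_pos δ), neg_add,
      ← sub_eq_add_neg]
    field_simp
  simp_rw [hshift]
  rw [integral_comp_sq_div_add_sq_div
    (fun r => G ((2 * π)⁻¹ * (σ ^ 2 * exp (-(r + log (cosh δ)))))) (by positivity) (by positivity),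
    hab,
    integral_Ioi_comp_add_right (fun s => G ((2 * π)⁻¹ * (σ ^ 2 * exp (-s)))), zero_add]

theorem integral_min_wignerVilleSpectrum (θ : ℝ) :
    ∫ p : ℝ × ℝ, min (θ ^ 2 / (2 * π)) (wignerVilleSpectrum σ γδ δ p.1 p.2) =
      cosh δ / sinh δ / 2 * ∫ s in Ioi (log (cosh δ)), min (θ ^ 2) (σ ^ 2 * exp (-s)) := by
  have hpi : 0 < (2 * π)⁻¹ := by positivity
  simp_rw [integral_comp_wignerVilleSpectrum σ hγ hδ (min (θ ^ 2 / (2 * π))),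
    div_eq_inv_mul (θ ^ 2), ← mul_min_of_nonneg _ _ hpi.le, integral_const_mul]
  field_simp

theorem integral_log_wignerVilleSpectrum (θ : ℝ) :
    1 / (2 * π) *
        ∫ p : ℝ × ℝ, max 0 (1 / 2 * log (wignerVilleSpectrum σ γδ δ p.1 p.2 / (θ ^ 2 / (2 * π)))) =
      cosh δ / sinh δ / 2 *
        ∫ s in Ioi (log (cosh δ)), max 0 (1 / 2 * log (σ ^ 2 * exp (-s) / θ ^ 2)) := by
  have hratio (x : ℝ) : (2 * π)⁻¹ * x / (θ ^ 2 / (2 * π)) = x / θ ^ 2 := by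
    field_simp [pi_ne_zero]
  rw [integral_comp_wignerVilleSpectrum σ hγ hδ
    (fun x => max 0 (1 / 2 * log (x / (θ ^ 2 / (2 * π)))))]
  simp_rw [hratio]
  field_simp

end wignerVilleSpectrum

theorem integrableOn_Ioi_of_le_mul_exp_neg {g : ℝ → ℝ} (hg : Measurable g) (hg0 : ∀ s, 0 ≤ g s)
    {C : ℝ} (hC : ∀ s, g s ≤ C * exp (-s)) (a : ℝ) : IntegrableOn g (Ioi a) :=
  ((integrableOn_exp_neg_Ioi a).const_mul C).mono' hg.aestronglyMeasurable
    (ae_of_all _ fun s => (norm_of_nonneg (hg0 s)).trans_le (hC s))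

section WaterFillingProfiles

variable {c d : ℝ}

theorem antitone_min_mul_exp_neg (hd : 0 ≤ d) : Antitone fun s => min c (d * exp (-s)) :=
  fun _ _ hst => min_le_min_left _ (by gcongr)

theorem integrableOn_min_mul_exp_neg (hc : 0 ≤ c) (hd : 0 ≤ d) (a : ℝ) :
    IntegrableOn (fun s => min c (d * exp (-s))) (Ioi a) :=
  integrableOn_Ioi_of_le_mul_exp_neg (by fun_prop) (fun _ => by positivity)
    (fun _ => min_le_right _ _) a

theorem antitone_max_log_mul_exp_neg_div (hc : 0 < c) (hd : 0 < d) :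
    Antitone fun s => max 0 (1 / 2 * log (d * exp (-s) / c)) :=
  fun _ _ hst => max_le_max le_rfl (by gcongr)

theorem integrableOn_max_log_mul_exp_neg_div (c d a : ℝ) :
    IntegrableOn (fun s => max 0 (1 / 2 * log (d * exp (-s) / c))) (Ioi a) := by
  refine integrableOn_Ioi_of_le_mul_exp_neg (C := |d / c| / 2) (by fun_prop)
    (fun _ => le_max_left _ _) (fun s => max_le (by positivity) ?_) a
  calc 1 / 2 * log (d * exp (-s) / c) = 1 / 2 * log |d * exp (-s) / c| := by rw [log_abs]
    _ ≤ 1 / 2 * |d * exp (-s) / c| := by gcongr; exact log_le_self (abs_nonneg _)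
    _ = |d / c| / 2 * exp (-s) := by
      rw [mul_div_right_comm, abs_mul, abs_of_pos (exp_pos _)]; ring

end WaterFillingProfiles

theorem tendsto_mul_coth_nhdsGT_zero :
    Tendsto (fun δ => δ * (cosh δ / sinh δ)) (𝓝[>] 0) (𝓝 1) := by
  have hsinh : Tendsto (fun δ => δ⁻¹ * sinh δ) (𝓝[>] 0) (𝓝 1) := by
    have := (Real.hasDerivAt_sinh 0).tendsto_slope_zero.mono_left
      (nhdsWithin_mono 0 fun x (hx : x ∈ Ioi 0) => (ne_of_gt hx : x ≠ 0))
    simpa [Real.cosh_zero] using this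
  have hcosh : Tendsto cosh (𝓝[>] 0) (𝓝 1) := by
    simpa using Real.continuous_cosh.continuousWithinAt.tendsto (x := 0) (s := Ioi 0)
  have := hcosh.div hsinh one_ne_zero
  rw [div_one] at this
  refine this.congr fun δ => ?_
  simp only [Pi.div_apply, div_eq_mul_inv, mul_inv, inv_inv]
  ring

theorem tendsto_log_cosh_nhdsGT_zero :
    Tendsto (fun δ => log (cosh δ)) (𝓝[>] 0) (𝓝[≥] 0) := by
  refine tendsto_nhdsWithin_iff.2 ⟨?_, Eventually.of_forall fun δ => log_nonneg (one_le_cosh δ)⟩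
  simpa using ((continuous_cosh.log fun δ => (cosh_pos δ).ne').tendsto 0).mono_left
    nhdsWithin_le_nhds

theorem reverse_waterfilling_tf
    (σ θ : ℝ) (hσ : 0 < σ) (hθ : θ ∈ Set.Ioc 0 σ)
    (γ : ℝ → ℝ) (hγ : ∀ δ > 0, 0 < γ δ)
    (Φ : ℝ → ℝ → ℝ → ℝ)
    (hΦ : ∀ δ > 0, ∀ t ω : ℝ, Φ δ t ω =
      (σ ^ 2 / (2 * π * Real.cosh δ)) *
        Real.exp (-(t ^ 2 / (γ δ * Real.sqrt (Real.cosh δ / Real.sinh δ)) ^ 2) -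
          ω ^ 2 / ((γ δ)⁻¹ * Real.sqrt (Real.cosh δ / Real.sinh δ)) ^ 2))
    (D R : ℝ → ℝ)
    (hD : ∀ δ > 0, D δ =
      ∑' k : ℕ, min (θ ^ 2) (σ ^ 2 * Real.exp (-((2 * (k : ℝ) + 1) * δ))))
    (hR : ∀ δ > 0, R δ =
      ∑' k : ℕ, max 0 ((1 / 2) *
        Real.log (σ ^ 2 * Real.exp (-((2 * (k : ℝ) + 1) * δ)) / θ ^ 2))) :
    Filter.Tendsto
      (fun δ : ℝ =>
        (D δ - ∫ p : ℝ × ℝ, min (θ ^ 2 / (2 * π)) (Φ δ p.1 p.2)) /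
          (Real.cosh δ / Real.sinh δ))
      (nhdsWithin 0 (Set.Ioi 0)) (nhds 0) ∧
    Filter.Tendsto
      (fun δ : ℝ =>
        (R δ - (1 / (2 * π)) * ∫ p : ℝ × ℝ,
            max 0 ((1 / 2) * Real.log (Φ δ p.1 p.2 / (θ ^ 2 / (2 * π))))) /
          (Real.cosh δ / Real.sinh δ))
      (nhdsWithin 0 (Set.Ioi 0)) (nhds 0) := by
  have hθ0 : 0 < θ := hθ.1
  have hspec : ∀ δ > 0, Φ δ = wignerVilleSpectrum σ (γ δ) δ := fun δ hδ => funext₂ (hΦ δ hδ)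
  constructor
  · refine (tendsto_tsum_odd_sub_integral_div
      ((antitone_min_mul_exp_neg (sq_nonneg σ)).antitoneOn _) (fun _ _ => by positivity)
      (integrableOn_min_mul_exp_neg (sq_nonneg θ) (sq_nonneg σ) 0)
      tendsto_mul_coth_nhdsGT_zero tendsto_log_cosh_nhdsGT_zero).congr' ?_
    filter_upwards [self_mem_nhdsWithin] with δ hδ
    rw [hD δ hδ, hspec δ hδ, integral_min_wignerVilleSpectrum σ (hγ δ hδ) hδ]
  · refine (tendsto_tsum_odd_sub_integral_div
      ((antitone_max_log_mul_exp_neg_div (c := θ ^ 2) (d := σ ^ 2) (by positivity)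
        (by positivity)).antitoneOn _)
      (fun _ _ => le_max_left _ _) (integrableOn_max_log_mul_exp_neg_div _ _ 0)
      tendsto_mul_coth_nhdsGT_zero tendsto_log_cosh_nhdsGT_zero).congr' ?_
    filter_upwards [self_mem_nhdsWithin] with δ hδ
    rw [hR δ hδ, hspec δ hδ, integral_log_wignerVilleSpectrum σ (hγ δ hδ) hδ]
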